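/- Let P be a dynamic path instance with n ≥ 1, w_0 ≥ 1 and w_n ≥ 1. Then there is a unique point x* ∈ [x_0, x_n] at which x ↦ Θ(P,x) attains its minimum over [x_0, x_n]. Moreover, for every x ∈ [x_0, x_n] with x < x* one has Θ_L(P,x) < Θ_R(P,x) (so Θ(P,x) = Θ_R(P,x)), and for every x ∈ [x_0, x_n] with x > x* one has Θ_L(P,x) > Θ_R(P,x) (so Θ(P,x) = Θ_L(P,x)). In particular Θ(P,·) is strictly unimodal: it strictly decreases on [x_0, x*] and strictly increases on [x*, x_n]. -/

import Mathlib

/-!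
Each arrival time entering `Θ_L` grows at rate at least `τ` as the sink moves right (the
distance grows and the bottleneck capacity can only drop), and vertex `a`, having positive
weight, contributes a term at least `τ` times its distance to the sink; so `Θ_L` is strictly
increasing on `[x_a, x_b]`, and symmetrically `Θ_R` is strictly decreasing. Hence there is one
crossing point `x*`, with `Θ_L < Θ_R` to its left and `Θ_R < Θ_L` to its right. While the sink
stays between two consecutive vertices no bottleneck changes, so `Θ_L` cannot jump up from the
left (it is lower semicontinuous from the left) and `Θ_R` cannot jump up from the right; hence
`Θ_L(x*)` is bounded by the values of `Θ_R` just left of `x*`, and `x*` is the strict minimiser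
of `Θ = max Θ_L Θ_R`.
-/

/-- A dynamic path instance: `n+1` vertices at strictly increasing coordinates
`x 0 < x 1 < ⋯ < x n`, natural-number weights `w i`, positive integer capacities
`c j` (capacity of the edge from `x (j-1)` to `x j`, for `1 ≤ j ≤ n`), and a
positive travel time `τ` per unit distance. -/
structure DPath where
  n : ℕ
  x : ℕ → ℝ
  w : ℕ → ℕ
  c : ℕ → ℕ
  τ : ℝ
  hx : ∀ i, i < n → x i < x (i + 1)
  hc : ∀ j, 1 ≤ j → j ≤ n → 0 < c j
  hτ : 0 < τ

/-- `P.W a i = w_a + ⋯ + w_i`. -/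
def DPath.W (P : DPath) (a i : ℕ) : ℕ := ∑ j ∈ Finset.Icc a i, P.w j

/-- For a sink at `y` in subpath `P_{a,b}`: the minimum capacity
`min_{i+1 ≤ j ≤ k+1} c_j`, where `k` is the index with `x_k < y ≤ x_{k+1}`;
the edges `j` with `i+1 ≤ j ≤ k+1` are exactly those with `i+1 ≤ j ≤ b` and
`x (j-1) < y`. -/
noncomputable def DPath.cL (P : DPath) (b : ℕ) (y : ℝ) (i : ℕ) : ℕ :=
  sInf (P.c '' {j | i + 1 ≤ j ∧ j ≤ b ∧ P.x (j - 1) < y})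

/-- For a sink at `y` in subpath `P_{a,b}`: the minimum capacity
`min_{k+1 ≤ j ≤ i} c_j`, where `k` is the index with `x_k ≤ y < x_{k+1}`;
the edges `j` with `k+1 ≤ j ≤ i` are exactly those with `a+1 ≤ j ≤ i` and
`y < x j`. -/
noncomputable def DPath.cR (P : DPath) (a : ℕ) (y : ℝ) (i : ℕ) : ℕ :=
  sInf (P.c '' {j | a + 1 ≤ j ∧ j ≤ i ∧ y < P.x j})

/-- Left evacuation time `Θ_L(P_{a,b}, y)`: the maximum, over indices `i` with
`a ≤ i ≤ b`, `x i < y` and `W_{a,i} ≥ 1`, of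
`(y − x_i)·τ + ⌈W_{a,i} / min_{i+1 ≤ j ≤ k+1} c_j⌉ − 1`; it is `0` if no such
index exists. -/
noncomputable def ThetaL (P : DPath) (a b : ℕ) (y : ℝ) : ℝ :=
  sSup (insert 0 {t : ℝ | ∃ i, a ≤ i ∧ i ≤ b ∧ P.x i < y ∧ 1 ≤ P.W a i ∧
    t = (y - P.x i) * P.τ + (⌈(P.W a i : ℝ) / (P.cL b y i : ℝ)⌉ : ℝ) - 1})

/-- Right evacuation time `Θ_R(P_{a,b}, y)`. -/
noncomputable def ThetaR (P : DPath) (a b : ℕ) (y : ℝ) : ℝ :=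
  sSup (insert 0 {t : ℝ | ∃ i, a ≤ i ∧ i ≤ b ∧ y < P.x i ∧ 1 ≤ P.W i b ∧
    t = (P.x i - y) * P.τ + (⌈(P.W i b : ℝ) / (P.cR a y i : ℝ)⌉ : ℝ) - 1})

/-- Evacuation time of subpath `P_{a,b}` to sink `y`. -/
noncomputable def Theta (P : DPath) (a b : ℕ) (y : ℝ) : ℝ :=
  max (ThetaL P a b y) (ThetaR P a b y)

/-- `Θ¹(P_{a,b})`: minimum 1-sink evacuation time of subpath `P_{a,b}`
over sinks `y ∈ [x_a, x_b]`. -/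
noncomputable def Theta1 (P : DPath) (a b : ℕ) : ℝ :=
  sInf (Theta P a b '' Set.Icc (P.x a) (P.x b))

/-- `Θᵏ(P_{a,b})`: minimum over all partitions of `{a, …, b}` into at most `k`
nonempty intervals `[f j, f (j+1) - 1]`, of the maximum over the intervals of
`Θ¹`. -/
noncomputable def ThetaK (P : DPath) (k a b : ℕ) : ℝ :=
  sInf {t : ℝ | ∃ (m : ℕ) (f : ℕ → ℕ), 1 ≤ m ∧ m ≤ k ∧
    f 0 = a ∧ f m = b + 1 ∧ (∀ j, j < m → f j < f (j + 1)) ∧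
    t = ⨆ j : Fin m, Theta1 P (f j.val) (f (j.val + 1) - 1)}

open Set Filter Topology

section Crossing

variable {f g : ℝ → ℝ}

theorem LowerSemicontinuousWithinAt.le_of_lt_on_Ioo_of_antitoneOn {u z : ℝ} (huz : u < z)
    (hf : LowerSemicontinuousWithinAt f (Iio z) z) (hg : AntitoneOn g (Icc u z))
    (hfg : ∀ y ∈ Ioo u z, f y < g y) : f z ≤ g u := by
  refine le_of_forall_lt fun t ht => ?_
  obtain ⟨y, hty, hy⟩ := ((hf t ht).and (Ioo_mem_nhdsLT huz)).exists
  exact hty.trans ((hfg y hy).trans_le (hg ⟨le_rfl, huz.le⟩ (Ioo_subset_Icc_self hy) hy.1.le))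

theorem LowerSemicontinuousWithinAt.le_of_lt_on_Ioo_of_monotoneOn {z v : ℝ} (hzv : z < v)
    (hf : LowerSemicontinuousWithinAt f (Ioi z) z) (hg : MonotoneOn g (Icc z v))
    (hfg : ∀ y ∈ Ioo z v, f y < g y) : f z ≤ g v := by
  refine le_of_forall_lt fun t ht => ?_
  obtain ⟨y, hty, hy⟩ := ((hf t ht).and (Ioo_mem_nhdsGT hzv)).exists
  exact hty.trans ((hfg y hy).trans_le (hg (Ioo_subset_Icc_self hy) ⟨hzv.le, le_rfl⟩ hy.2.le))

variable {p q : ℝ}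

/-- Taking the infimum of `{q} ∪ {y | g y ≤ f y}` covers the case where `f < g` throughout. -/
theorem exists_crossing_of_strictMonoOn_of_strictAntiOn (hpq : p ≤ q)
    (hf : StrictMonoOn f (Icc p q)) (hg : StrictAntiOn g (Icc p q)) :
    ∃ c ∈ Icc p q, (∀ y ∈ Icc p q, y < c → f y < g y) ∧ (∀ y ∈ Icc p q, c < y → g y < f y) := by
  set A := insert q {y ∈ Icc p q | g y ≤ f y}
  have hA : A ⊆ Icc p q := insert_subset ⟨hpq, le_rfl⟩ fun y hy => hy.1
  have hAne : A.Nonempty := insert_nonempty _ _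
  have hAbdd : BddBelow A := ⟨p, fun y hy => (hA hy).1⟩
  refine ⟨sInf A, ⟨le_csInf hAne fun y hy => (hA hy).1, csInf_le hAbdd (mem_insert _ _)⟩, ?_, ?_⟩
  · intro y hy hyc
    by_contra! hgf
    exact (csInf_le hAbdd (mem_insert_of_mem _ ⟨hy, hgf⟩)).not_gt hyc
  · intro y hy hcy
    obtain ⟨u, huA, huy⟩ := exists_lt_of_csInf_lt hAne hcy
    rcases huA with rfl | ⟨hu, hgf⟩
    · exact absurd hy.2 huy.not_ge
    · calc g y < g u := hg hu hy huy
        _ ≤ f u := hgf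
        _ < f y := hf hu hy huy

theorem max_lt_max_of_crossing (hf : StrictMonoOn f (Icc p q)) (hg : StrictAntiOn g (Icc p q))
    (hfc : ∀ z ∈ Icc p q, LowerSemicontinuousWithinAt f (Iio z) z)
    (hgc : ∀ z ∈ Icc p q, LowerSemicontinuousWithinAt g (Ioi z) z) {c : ℝ} (hc : c ∈ Icc p q)
    (hleft : ∀ y ∈ Icc p q, y < c → f y < g y) (hright : ∀ y ∈ Icc p q, c < y → g y < f y) :
    ∀ y ∈ Icc p q, y ≠ c → max (f c) (g c) < max (f y) (g y) := by
  intro y hy hyc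
  have hmid : (y + c) / 2 ∈ Icc p q := ⟨by linarith [hy.1, hc.1], by linarith [hy.2, hc.2]⟩
  rcases hyc.lt_or_gt with hlt | hgt
  · have hfc_le : f c ≤ g ((y + c) / 2) :=
      (hfc c hc).le_of_lt_on_Ioo_of_antitoneOn (by linarith)
        (hg.antitoneOn.mono (Icc_subset_Icc hmid.1 hc.2))
        fun z hz => hleft z ⟨hmid.1.trans hz.1.le, hz.2.le.trans hc.2⟩ hz.2
    refine lt_max_of_lt_right (max_lt ?_ (hg hy hc hlt))
    exact hfc_le.trans_lt (hg hy hmid (by linarith))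
  · have hgc_le : g c ≤ f ((y + c) / 2) :=
      (hgc c hc).le_of_lt_on_Ioo_of_monotoneOn (by linarith)
        (hf.monotoneOn.mono (Icc_subset_Icc hc.1 hmid.2))
        fun z hz => hright z ⟨hc.1.trans hz.1.le, hz.2.le.trans hmid.2⟩ hz.1
    refine lt_max_of_lt_left (max_lt (hf hc hy hgt) ?_)
    exact hgc_le.trans_lt (hf hmid hy (by linarith))

theorem exists_unimodal_max_of_strictMonoOn_of_strictAntiOn (hpq : p ≤ q)
    (hf : StrictMonoOn f (Icc p q)) (hg : StrictAntiOn g (Icc p q))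
    (hfc : ∀ z ∈ Icc p q, LowerSemicontinuousWithinAt f (Iio z) z)
    (hgc : ∀ z ∈ Icc p q, LowerSemicontinuousWithinAt g (Ioi z) z) :
    ∃ c ∈ Icc p q,
      (∀ y ∈ Icc p q, max (f c) (g c) ≤ max (f y) (g y)) ∧
      (∀ y ∈ Icc p q, (∀ z ∈ Icc p q, max (f y) (g y) ≤ max (f z) (g z)) → y = c) ∧
      (∀ y ∈ Icc p q, y < c → f y < g y ∧ max (f y) (g y) = g y) ∧
      (∀ y ∈ Icc p q, c < y → g y < f y ∧ max (f y) (g y) = f y) ∧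
      StrictAntiOn (fun y => max (f y) (g y)) (Icc p c) ∧
      StrictMonoOn (fun y => max (f y) (g y)) (Icc c q) := by
  obtain ⟨c, hc, hleft, hright⟩ := exists_crossing_of_strictMonoOn_of_strictAntiOn hpq hf hg
  have hmin := max_lt_max_of_crossing hf hg hfc hgc hc hleft hright
  refine ⟨c, hc, fun y hy => ?_, fun y hy hy_min => ?_, fun y hy hyc => ?_, fun y hy hcy => ?_,
    fun u hu v hv huv => ?_, fun u hu v hv huv => ?_⟩
  · rcases eq_or_ne y c with rfl | hyc
    exacts [le_rfl, (hmin y hy hyc).le]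
  · by_contra hyc
    exact (hmin y hy hyc).not_ge (hy_min c hc)
  · exact ⟨hleft y hy hyc, max_eq_right (hleft y hy hyc).le⟩
  · exact ⟨hright y hy hcy, max_eq_left (hright y hy hcy).le⟩
  · have hu' : u ∈ Icc p q := ⟨hu.1, hu.2.trans hc.2⟩
    have huc : u < c := huv.trans_le hv.2
    show max (f v) (g v) < max (f u) (g u)
    rw [max_eq_right (hleft u hu' huc).le]
    rcases hv.2.eq_or_lt with rfl | hvc
    · exact (hmin u hu' huc.ne).trans_eq (max_eq_right (hleft u hu' huc).le)
    · rw [max_eq_right (hleft v ⟨hv.1, hv.2.trans hc.2⟩ hvc).le]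
      exact hg hu' ⟨hv.1, hv.2.trans hc.2⟩ huv
  · have hv' : v ∈ Icc p q := ⟨hc.1.trans hv.1, hv.2⟩
    have hcv : c < v := hu.1.trans_lt huv
    show max (f u) (g u) < max (f v) (g v)
    rw [max_eq_left (hright v hv' hcv).le]
    rcases hu.1.eq_or_lt with rfl | hcu
    · exact (hmin v hv' hcv.ne').trans_eq (max_eq_left (hright v hv' hcv).le)
    · rw [max_eq_left (hright u ⟨hc.1.trans hu.1, hu.2⟩ hcu).le]
      exact hf ⟨hc.1.trans hu.1, hu.2⟩ hv' huv

end Crossing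

theorem Filter.eventually_nhdsLT_forall_lt_iff {ι : Type*} {I : Set ι} (hI : I.Finite)
    (x : ι → ℝ) (z : ℝ) : ∀ᶠ y in 𝓝[<] z, ∀ i ∈ I, (x i < y ↔ x i < z) := by
  refine (eventually_all_finite hI).2 fun i _ => ?_
  by_cases hiz : x i < z
  · filter_upwards [Ioo_mem_nhdsLT hiz] with y hy using iff_of_true hy.1 hiz
  · filter_upwards [self_mem_nhdsWithin] with y (hy : y < z)
    exact iff_of_false (fun h => hiz (h.trans hy)) hiz

theorem Filter.eventually_nhdsGT_forall_lt_iff {ι : Type*} {I : Set ι} (hI : I.Finite)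
    (x : ι → ℝ) (z : ℝ) : ∀ᶠ y in 𝓝[>] z, ∀ i ∈ I, (y < x i ↔ z < x i) := by
  refine (eventually_all_finite hI).2 fun i _ => ?_
  by_cases hiz : z < x i
  · filter_upwards [Ioo_mem_nhdsGT hiz] with y hy using iff_of_true hy.2 hiz
  · filter_upwards [self_mem_nhdsWithin] with y (hy : z < y)
    exact iff_of_false (fun h => hiz (hy.trans h)) hiz

theorem one_le_ceil_div {W c : ℕ} (hW : 1 ≤ W) (hc : 1 ≤ c) : (1 : ℝ) ≤ ⌈(W : ℝ) / c⌉ := by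
  exact_mod_cast Int.one_le_ceil_iff.2 (by positivity)

theorem ceil_div_le_ceil_div {W c c' : ℕ} (hc : 1 ≤ c) (hcc' : c ≤ c') :
    (⌈(W : ℝ) / c'⌉ : ℝ) ≤ ⌈(W : ℝ) / c⌉ := by
  exact_mod_cast Int.ceil_le_ceil
    (div_le_div_of_nonneg_left (Nat.cast_nonneg W) (by exact_mod_cast hc) (by exact_mod_cast hcc'))

namespace DPath

variable (P : DPath) {a b i : ℕ} {y y' : ℝ}

theorem x_strictMonoOn : StrictMonoOn P.x (Iic P.n) :=
  strictMonoOn_Iic_of_lt_succ P.hx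

theorem one_le_sInf_c {J : Set ℕ} (hJ : J.Nonempty) (hJn : ∀ j ∈ J, 1 ≤ j ∧ j ≤ P.n) :
    1 ≤ sInf (P.c '' J) :=
  le_csInf (hJ.image _) fun _ ⟨j, hj, hcj⟩ => hcj ▸ P.hc j (hJn j hj).1 (hJn j hj).2

theorem one_le_cL (hb : b ≤ P.n) (hib : i ≤ b) (hxi : P.x i < y) (hyb : y ≤ P.x b) :
    1 ≤ P.cL b y i := by
  have hi : i < b := lt_of_le_of_ne hib fun h => (h ▸ hxi).not_ge hyb
  exact P.one_le_sInf_c ⟨i + 1, le_rfl, hi, by simpa using hxi⟩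
    fun j hj => ⟨le_of_add_le_right hj.1, hj.2.1.trans hb⟩

theorem cL_le_cL_of_le (hib : i ≤ b) (hxi : P.x i < y) (hyb : y ≤ P.x b) (hyy' : y ≤ y') :
    P.cL b y' i ≤ P.cL b y i := by
  have hi : i < b := lt_of_le_of_ne hib fun h => (h ▸ hxi).not_ge hyb
  exact csInf_le_csInf (OrderBot.bddBelow _) ⟨_, ⟨i + 1, ⟨le_rfl, hi, by simpa using hxi⟩, rfl⟩⟩
    (image_mono fun j hj => ⟨hj.1, hj.2.1, hj.2.2.trans_le hyy'⟩)

theorem cL_congr (h : ∀ j ∈ Iic b, P.x j < y ↔ P.x j < y') : P.cL b y i = P.cL b y' i := by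
  unfold cL
  congr 2
  ext j
  exact and_congr_right fun _ => and_congr_right fun hjb => h _ ((Nat.sub_le j 1).trans hjb)

theorem one_le_cR (hb : b ≤ P.n) (hai : a ≤ i) (hib : i ≤ b) (hay : P.x a ≤ y)
    (hxi : y < P.x i) : 1 ≤ P.cR a y i := by
  have hi : a < i := lt_of_le_of_ne hai fun h => (h ▸ hxi).not_ge hay
  exact P.one_le_sInf_c ⟨i, hi, le_rfl, hxi⟩
    fun j hj => ⟨le_of_add_le_right hj.1, hj.2.1.trans (hib.trans hb)⟩

theorem cR_le_cR_of_le (hai : a ≤ i) (hay' : P.x a ≤ y') (hxi : y' < P.x i) (hyy' : y ≤ y') :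
    P.cR a y i ≤ P.cR a y' i := by
  have hi : a < i := lt_of_le_of_ne hai fun h => (h ▸ hxi).not_ge hay'
  exact csInf_le_csInf (OrderBot.bddBelow _) ⟨_, ⟨i, ⟨hi, le_rfl, hxi⟩, rfl⟩⟩
    (image_mono fun j hj => ⟨hj.1, hj.2.1, hyy'.trans_lt hj.2.2⟩)

theorem cR_congr (hib : i ≤ b) (h : ∀ j ∈ Iic b, y < P.x j ↔ y' < P.x j) :
    P.cR a y i = P.cR a y' i := by
  unfold cR
  congr 2
  ext j
  exact and_congr_right fun _ => and_congr_right fun hji => h _ (hji.trans hib)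

-- Arrival time at `y` of the last evacuee from `x_a, …, x_i` (resp. `x_i, …, x_b`).
noncomputable def leftArrival (a b : ℕ) (y : ℝ) (i : ℕ) : ℝ :=
  (y - P.x i) * P.τ + (⌈(P.W a i : ℝ) / (P.cL b y i : ℝ)⌉ : ℝ) - 1

noncomputable def rightArrival (a b : ℕ) (y : ℝ) (i : ℕ) : ℝ :=
  (P.x i - y) * P.τ + (⌈(P.W i b : ℝ) / (P.cR a y i : ℝ)⌉ : ℝ) - 1

theorem sub_mul_le_leftArrival (hW : 1 ≤ P.W a i) (hc : 1 ≤ P.cL b y i) :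
    (y - P.x i) * P.τ ≤ P.leftArrival a b y i := by
  have := one_le_ceil_div hW hc
  unfold leftArrival
  linarith

theorem sub_mul_le_rightArrival (hW : 1 ≤ P.W i b) (hc : 1 ≤ P.cR a y i) :
    (P.x i - y) * P.τ ≤ P.rightArrival a b y i := by
  have := one_le_ceil_div hW hc
  unfold rightArrival
  linarith

theorem leftArrival_add_le (hb : b ≤ P.n) (hib : i ≤ b) (hxi : P.x i < y) (hyy' : y ≤ y')
    (hy'b : y' ≤ P.x b) : P.leftArrival a b y i + (y' - y) * P.τ ≤ P.leftArrival a b y' i := by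
  have := ceil_div_le_ceil_div (W := P.W a i)
    (P.one_le_cL hb hib (hxi.trans_le hyy') hy'b) (P.cL_le_cL_of_le hib hxi (hyy'.trans hy'b) hyy')
  unfold leftArrival
  linarith

theorem rightArrival_add_le (hb : b ≤ P.n) (hai : a ≤ i) (hib : i ≤ b) (hay : P.x a ≤ y)
    (hyy' : y ≤ y') (hxi : y' < P.x i) :
    P.rightArrival a b y' i + (y' - y) * P.τ ≤ P.rightArrival a b y i := by
  have := ceil_div_le_ceil_div (W := P.W i b) (P.one_le_cR hb hai hib hay (hyy'.trans_lt hxi))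
    (P.cR_le_cR_of_le hai (hay.trans hyy') hxi hyy')
  unfold rightArrival
  linarith

theorem finite_thetaL_set : {t : ℝ | ∃ i, a ≤ i ∧ i ≤ b ∧ P.x i < y ∧ 1 ≤ P.W a i ∧
    t = P.leftArrival a b y i}.Finite :=
  ((finite_Icc a b).image _).subset fun _ ⟨j, haj, hjb, _, _, ht⟩ => ⟨j, ⟨haj, hjb⟩, ht.symm⟩

theorem finite_thetaR_set : {t : ℝ | ∃ i, a ≤ i ∧ i ≤ b ∧ y < P.x i ∧ 1 ≤ P.W i b ∧
    t = P.rightArrival a b y i}.Finite :=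
  ((finite_Icc a b).image _).subset fun _ ⟨j, haj, hjb, _, _, ht⟩ => ⟨j, ⟨haj, hjb⟩, ht.symm⟩

theorem thetaL_nonneg : 0 ≤ ThetaL P a b y :=
  le_csSup (P.finite_thetaL_set.insert 0).bddAbove (mem_insert _ _)

theorem thetaR_nonneg : 0 ≤ ThetaR P a b y :=
  le_csSup (P.finite_thetaR_set.insert 0).bddAbove (mem_insert _ _)

theorem leftArrival_le_thetaL (hai : a ≤ i) (hib : i ≤ b) (hxi : P.x i < y)
    (hW : 1 ≤ P.W a i) : P.leftArrival a b y i ≤ ThetaL P a b y :=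
  le_csSup (P.finite_thetaL_set.insert 0).bddAbove (mem_insert_of_mem _ ⟨i, hai, hib, hxi, hW, rfl⟩)

theorem rightArrival_le_thetaR (hai : a ≤ i) (hib : i ≤ b) (hxi : y < P.x i)
    (hW : 1 ≤ P.W i b) : P.rightArrival a b y i ≤ ThetaR P a b y :=
  le_csSup (P.finite_thetaR_set.insert 0).bddAbove (mem_insert_of_mem _ ⟨i, hai, hib, hxi, hW, rfl⟩)

theorem thetaL_le {t : ℝ} (ht : 0 ≤ t) (h : ∀ i, a ≤ i → i ≤ b → P.x i < y → 1 ≤ P.W a i →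
    P.leftArrival a b y i ≤ t) : ThetaL P a b y ≤ t :=
  csSup_le (insert_nonempty _ _) <| forall_mem_insert.2
    ⟨ht, fun _ ⟨i, hai, hib, hxi, hW, hti⟩ => hti ▸ h i hai hib hxi hW⟩

theorem thetaR_le {t : ℝ} (ht : 0 ≤ t) (h : ∀ i, a ≤ i → i ≤ b → y < P.x i → 1 ≤ P.W i b →
    P.rightArrival a b y i ≤ t) : ThetaR P a b y ≤ t :=
  csSup_le (insert_nonempty _ _) <| forall_mem_insert.2
    ⟨ht, fun _ ⟨i, hai, hib, hxi, hW, hti⟩ => hti ▸ h i hai hib hxi hW⟩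

theorem thetaL_le_add (hyy' : y ≤ y') (h : ∀ j ∈ Iic b, P.x j < y ↔ P.x j < y') :
    ThetaL P a b y' ≤ ThetaL P a b y + (y' - y) * P.τ := by
  have hd : 0 ≤ (y' - y) * P.τ := mul_nonneg (sub_nonneg.2 hyy') P.hτ.le
  refine P.thetaL_le (add_nonneg P.thetaL_nonneg hd) fun i hai hib hxi hW => ?_
  have hshift : P.leftArrival a b y' i = P.leftArrival a b y i + (y' - y) * P.τ := by
    rw [leftArrival, leftArrival, P.cL_congr h]
    ring
  rw [hshift]
  gcongr
  exact P.leftArrival_le_thetaL hai hib ((h i hib).2 hxi) hW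

theorem thetaR_le_add (hyy' : y ≤ y') (h : ∀ j ∈ Iic b, y < P.x j ↔ y' < P.x j) :
    ThetaR P a b y ≤ ThetaR P a b y' + (y' - y) * P.τ := by
  have hd : 0 ≤ (y' - y) * P.τ := mul_nonneg (sub_nonneg.2 hyy') P.hτ.le
  refine P.thetaR_le (add_nonneg P.thetaR_nonneg hd) fun i hai hib hxi hW => ?_
  have hshift : P.rightArrival a b y i = P.rightArrival a b y' i + (y' - y) * P.τ := by
    rw [rightArrival, rightArrival, P.cR_congr hib h]
    ring
  rw [hshift]
  gcongr
  exact P.rightArrival_le_thetaR hai hib ((h i hib).1 hxi) hW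

theorem thetaL_lowerSemicontinuousWithinAt (z : ℝ) :
    LowerSemicontinuousWithinAt (ThetaL P a b) (Iio z) z := by
  intro t ht
  have hlim : Tendsto (fun y => ThetaL P a b z - (z - y) * P.τ) (𝓝[<] z) (𝓝 (ThetaL P a b z)) :=
    tendsto_nhdsWithin_of_tendsto_nhds (by simpa using (by fun_prop :
      Continuous fun y => ThetaL P a b z - (z - y) * P.τ).tendsto z)
  filter_upwards [hlim.eventually_const_lt ht, eventually_nhdsLT_forall_lt_iff (finite_Iic b) P.x z,
    self_mem_nhdsWithin] with y hty hiff (hyz : y < z)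
  linarith [P.thetaL_le_add (a := a) hyz.le hiff]

theorem thetaR_lowerSemicontinuousWithinAt (z : ℝ) :
    LowerSemicontinuousWithinAt (ThetaR P a b) (Ioi z) z := by
  intro t ht
  have hlim : Tendsto (fun y => ThetaR P a b z - (y - z) * P.τ) (𝓝[>] z) (𝓝 (ThetaR P a b z)) :=
    tendsto_nhdsWithin_of_tendsto_nhds (by simpa using (by fun_prop :
      Continuous fun y => ThetaR P a b z - (y - z) * P.τ).tendsto z)
  filter_upwards [hlim.eventually_const_lt ht, eventually_nhdsGT_forall_lt_iff (finite_Iic b) P.x z,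
    self_mem_nhdsWithin] with y hty hiff (hzy : z < y)
  linarith [P.thetaR_le_add (a := a) hzy.le fun j hj => (hiff j hj).symm]

theorem W_self (i : ℕ) : P.W i i = P.w i := by
  simp [W]

theorem thetaL_add_le (hb : b ≤ P.n) (hab : a ≤ b) (hwa : 1 ≤ P.w a) (hay : P.x a ≤ y)
    (hyy' : y ≤ y') (hy'b : y' ≤ P.x b) :
    ThetaL P a b y + (y' - y) * P.τ ≤ ThetaL P a b y' := by
  rcases hyy'.eq_or_lt with rfl | hlt
  · simp
  have hxa : P.x a < y' := hay.trans_lt hlt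
  have hWa : 1 ≤ P.W a a := P.W_self a ▸ hwa
  rw [← le_sub_iff_add_le]
  refine P.thetaL_le ?_ fun i hai hib hxi hW => ?_
  · have := P.sub_mul_le_leftArrival hWa (P.one_le_cL hb hab hxa hy'b)
    have := P.leftArrival_le_thetaL le_rfl hab hxa hWa
    have : (y' - y) * P.τ ≤ (y' - P.x a) * P.τ := by gcongr; exact P.hτ.le
    linarith
  · linarith [P.leftArrival_add_le (a := a) hb hib hxi hyy' hy'b,
      P.leftArrival_le_thetaL hai hib (hxi.trans_le hyy') hW]

theorem thetaR_add_le (hb : b ≤ P.n) (hab : a ≤ b) (hwb : 1 ≤ P.w b) (hay : P.x a ≤ y)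
    (hyy' : y ≤ y') (hy'b : y' ≤ P.x b) :
    ThetaR P a b y' + (y' - y) * P.τ ≤ ThetaR P a b y := by
  rcases hyy'.eq_or_lt with rfl | hlt
  · simp
  have hxb : y < P.x b := hlt.trans_le hy'b
  have hWb : 1 ≤ P.W b b := P.W_self b ▸ hwb
  rw [← le_sub_iff_add_le]
  refine P.thetaR_le ?_ fun i hai hib hxi hW => ?_
  · have := P.sub_mul_le_rightArrival hWb (P.one_le_cR hb hab le_rfl hay hxb)
    have := P.rightArrival_le_thetaR hab le_rfl hxb hWb
    have : (y' - y) * P.τ ≤ (P.x b - y) * P.τ := by gcongr; exact P.hτ.le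
    linarith
  · linarith [P.rightArrival_add_le hb hai hib hay hyy' hxi,
      P.rightArrival_le_thetaR hai hib (hyy'.trans_lt hxi) hW]

theorem thetaL_strictMonoOn (hb : b ≤ P.n) (hab : a ≤ b) (hwa : 1 ≤ P.w a) :
    StrictMonoOn (ThetaL P a b) (Icc (P.x a) (P.x b)) := fun y hy y' hy' hlt => by
  have := P.thetaL_add_le hb hab hwa hy.1 hlt.le hy'.2
  have : 0 < (y' - y) * P.τ := mul_pos (sub_pos.2 hlt) P.hτ
  linarith

theorem thetaR_strictAntiOn (hb : b ≤ P.n) (hab : a ≤ b) (hwb : 1 ≤ P.w b) :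
    StrictAntiOn (ThetaR P a b) (Icc (P.x a) (P.x b)) := fun y hy y' hy' hlt => by
  have := P.thetaR_add_le hb hab hwb hy.1 hlt.le hy'.2
  have : 0 < (y' - y) * P.τ := mul_pos (sub_pos.2 hlt) P.hτ
  linarith

end DPath

theorem stmt7_general (P : DPath) (hw0 : 1 ≤ P.w 0) (hwn : 1 ≤ P.w P.n) :
    ∃ xs ∈ Set.Icc (P.x 0) (P.x P.n),
      (∀ y ∈ Set.Icc (P.x 0) (P.x P.n), Theta P 0 P.n xs ≤ Theta P 0 P.n y) ∧
      (∀ y ∈ Set.Icc (P.x 0) (P.x P.n),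
        (∀ z ∈ Set.Icc (P.x 0) (P.x P.n), Theta P 0 P.n y ≤ Theta P 0 P.n z) →
        y = xs) ∧
      (∀ y ∈ Set.Icc (P.x 0) (P.x P.n), y < xs →
        ThetaL P 0 P.n y < ThetaR P 0 P.n y ∧ Theta P 0 P.n y = ThetaR P 0 P.n y) ∧
      (∀ y ∈ Set.Icc (P.x 0) (P.x P.n), xs < y →
        ThetaR P 0 P.n y < ThetaL P 0 P.n y ∧ Theta P 0 P.n y = ThetaL P 0 P.n y) ∧
      StrictAntiOn (Theta P 0 P.n) (Set.Icc (P.x 0) xs) ∧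
      StrictMonoOn (Theta P 0 P.n) (Set.Icc xs (P.x P.n)) :=
  exists_unimodal_max_of_strictMonoOn_of_strictAntiOn
    (P.x_strictMonoOn.monotoneOn (Nat.zero_le _) (le_refl P.n) (Nat.zero_le _))
    (P.thetaL_strictMonoOn le_rfl (Nat.zero_le _) hw0)
    (P.thetaR_strictAntiOn le_rfl (Nat.zero_le _) hwn)
    (fun z _ => P.thetaL_lowerSemicontinuousWithinAt z)
    (fun z _ => P.thetaR_lowerSemicontinuousWithinAt z)

/-- with `n ≥ 1`, `w_0 ≥ 1`, `w_n ≥ 1`, there is a unique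
minimizer `x*` of `Θ(P,·)` on `[x_0, x_n]`; to its left `Θ_L < Θ_R` (so
`Θ = Θ_R`), to its right `Θ_L > Θ_R` (so `Θ = Θ_L`), and `Θ(P,·)` is strictly
decreasing on `[x_0, x*]` and strictly increasing on `[x*, x_n]`. -/
theorem stmt7 (P : DPath) (hn : 1 ≤ P.n) (hw0 : 1 ≤ P.w 0) (hwn : 1 ≤ P.w P.n) :
    ∃ xs ∈ Set.Icc (P.x 0) (P.x P.n),
      (∀ y ∈ Set.Icc (P.x 0) (P.x P.n), Theta P 0 P.n xs ≤ Theta P 0 P.n y) ∧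
      (∀ y ∈ Set.Icc (P.x 0) (P.x P.n),
        (∀ z ∈ Set.Icc (P.x 0) (P.x P.n), Theta P 0 P.n y ≤ Theta P 0 P.n z) →
        y = xs) ∧
      (∀ y ∈ Set.Icc (P.x 0) (P.x P.n), y < xs →
        ThetaL P 0 P.n y < ThetaR P 0 P.n y ∧ Theta P 0 P.n y = ThetaR P 0 P.n y) ∧
      (∀ y ∈ Set.Icc (P.x 0) (P.x P.n), xs < y →
        ThetaR P 0 P.n y < ThetaL P 0 P.n y ∧ Theta P 0 P.n y = ThetaL P 0 P.n y) ∧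
      StrictAntiOn (Theta P 0 P.n) (Set.Icc (P.x 0) xs) ∧
      StrictMonoOn (Theta P 0 P.n) (Set.Icc xs (P.x P.n)) :=
  stmt7_general P hw0 hwn
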